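/- For every μ > 0, the function g : ℝ → ℝ defined by g(x) = e^{x/2} W_{−1/2, μ}(2 e^{−x}) is twice differentiable and satisfies g''(x) = (e^{−x} + e^{−2x} + μ²) g(x) for all x ∈ ℝ. -/

import Mathlib

open Real

/-- The Whittaker function
`W_{k,μ}(z) = (z^k e^{-z/2} / Γ(1/2 + μ - k)) ∫_0^∞ e^{-t} t^{μ-k-1/2} (1 + t/z)^{μ+k-1/2} dt`. -/
noncomputable def whittakerW (k μ z : ℝ) : ℝ :=
  z ^ k * Real.exp (-z / 2) / Real.Gamma (1 / 2 + μ - k) *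
    ∫ t in Set.Ioi (0 : ℝ),
      Real.exp (-t) * t ^ (μ - k - 1 / 2) * (1 + t / z) ^ (μ + k - 1 / 2)

/-!
Put `J(a, b, z) = ∫_0^∞ e^{-t} t^a (1 + t/z)^b dt`, so that
`W_{k,μ}(z) = z^k e^{-z/2} J(μ - k - 1/2, μ + k - 1/2, z) / Γ(1/2 + μ - k)`.
Differentiating under the integral sign gives `∂_z J(a, b, z) = -(b/z²) J(a + 1, b - 1, z)`, and
integration by parts together with `(1 + t/z)^b = (1 + t/z)^{b-1} (1 + t/z)` gives a three-term
recurrence between `J(a, b)`, `J(a + 1, b - 1)` and `J(a + 2, b - 2)`. This recurrence is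
exactly what turns `W''` into Whittaker's equation `W'' = (1/4 - k/z + (μ² - 1/4)/z²) W`.
The substitution `z = 2e^{-x}`, `g(x) = e^{x/2} W(z)` turns any equation `W'' = q(z) W` into
`g'' = (1/4 + z² q(z)) g`, which for `k = -1/2` reads `g'' = (e^{-x} + e^{-2x} + μ²) g`.
-/

open MeasureTheory Set Filter Topology

noncomputable def whittakerIntegrand (a b z t : ℝ) : ℝ :=
  exp (-t) * t ^ a * (1 + t / z) ^ b

noncomputable def whittakerIntegral (a b z : ℝ) : ℝ :=
  ∫ t in Ioi 0, whittakerIntegrand a b z t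

theorem whittakerW_eq_whittakerIntegral (k μ z : ℝ) :
    whittakerW k μ z = z ^ k * exp (-z / 2) / Gamma (1 / 2 + μ - k) *
      whittakerIntegral (μ - k - 1 / 2) (μ + k - 1 / 2) z :=
  rfl

section Integrand

variable {a b z t : ℝ}

theorem rpow_le_rpow_abs_of_one_le {u C : ℝ} (b : ℝ) (hu : 1 ≤ u) (huC : u ≤ C) :
    u ^ b ≤ C ^ |b| :=
  (rpow_le_rpow_of_exponent_le hu (le_abs_self b)).trans
    (rpow_le_rpow (by linarith) huC (abs_nonneg b))

theorem one_le_one_add_div (hz : 0 < z) (ht : 0 < t) : 1 ≤ 1 + t / z := by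
  have := div_pos ht hz
  linarith

theorem whittakerIntegrand_nonneg (hz : 0 < z) (ht : 0 < t) :
    0 ≤ whittakerIntegrand a b z t := by
  have := one_le_one_add_div hz ht
  unfold whittakerIntegrand
  positivity

theorem whittakerIntegrand_add_one_left (ht : 0 < t) :
    whittakerIntegrand (a + 1) b z t = t * whittakerIntegrand a b z t := by
  simp only [whittakerIntegrand, rpow_add_one ht.ne']
  ring

theorem whittakerIntegrand_le_of_le {y : ℝ} (hy : 0 < y) (hyz : y ≤ z) (ht : 0 < t) :
    whittakerIntegrand a b z t ≤ whittakerIntegrand a |b| y t := by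
  unfold whittakerIntegrand
  have hle : 1 + t / z ≤ 1 + t / y := by gcongr
  gcongr
  exact rpow_le_rpow_abs_of_one_le b (one_le_one_add_div (hy.trans_le hyz) ht) hle

theorem whittakerIntegrand_le (hz : 0 < z) (ht : 0 < t) :
    whittakerIntegrand a b z t ≤
      ((1 + 1 / z) * 2) ^ |b| * (exp (-t) * t ^ a + exp (-t) * t ^ (a + |b|)) := by
  have hmax : 1 + t / z ≤ (1 + 1 / z) * 2 * max 1 t := by
    have := le_max_left 1 t
    have := le_max_right 1 t
    rw [div_eq_mul_inv, one_div]
    nlinarith [inv_pos.2 hz]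
  have hpow : max 1 t ^ |b| ≤ 1 + t ^ |b| := by
    have := rpow_nonneg ht.le |b|
    rcases le_total t 1 with h | h
    · rw [max_eq_left h, one_rpow]; linarith
    · rw [max_eq_right h]; linarith
  calc whittakerIntegrand a b z t
      ≤ exp (-t) * t ^ a * (((1 + 1 / z) * 2) ^ |b| * max 1 t ^ |b|) := by
        rw [← mul_rpow (by positivity) (by positivity)]
        unfold whittakerIntegrand
        gcongr
        exact rpow_le_rpow_abs_of_one_le b (one_le_one_add_div hz ht) hmax
    _ ≤ exp (-t) * t ^ a * (((1 + 1 / z) * 2) ^ |b| * (1 + t ^ |b|)) := by gcongr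
    _ = _ := by rw [rpow_add ht]; ring

theorem continuousOn_whittakerIntegrand (hz : 0 < z) :
    ContinuousOn (whittakerIntegrand a b z) (Ioi 0) := by
  intro t ht
  have h1 := one_le_one_add_div hz ht
  have h0 : t ≠ 0 := (mem_Ioi.1 ht).ne'
  unfold whittakerIntegrand
  apply ContinuousAt.continuousWithinAt
  fun_prop (disch := first | assumption | (left; positivity) | (left; linarith))

theorem integrableOn_whittakerIntegrand (ha : -1 < a) (hz : 0 < z) :
    IntegrableOn (whittakerIntegrand a b z) (Ioi 0) := by
  have hmajorant : IntegrableOn (fun t => exp (-t) * t ^ a + exp (-t) * t ^ (a + |b|)) (Ioi 0) := by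
    have h1 := GammaIntegral_convergent (show 0 < a + 1 by linarith)
    have h2 := GammaIntegral_convergent (show 0 < a + |b| + 1 by linarith [abs_nonneg b])
    simp only [add_sub_cancel_right] at h1 h2
    exact h1.add h2
  refine (hmajorant.const_mul (((1 + 1 / z) * 2) ^ |b|)).mono'
    ((continuousOn_whittakerIntegrand hz).aestronglyMeasurable measurableSet_Ioi) ?_
  filter_upwards [ae_restrict_mem measurableSet_Ioi] with t ht
  rw [norm_of_nonneg (whittakerIntegrand_nonneg hz ht)]
  exact whittakerIntegrand_le hz ht

theorem tendsto_whittakerIntegrand_atTop (hz : 0 < z) :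
    Tendsto (whittakerIntegrand a b z) atTop (𝓝 0) := by
  have hmajorant : Tendsto (fun t => ((1 + 1 / z) * 2) ^ |b| *
      (exp (-t) * t ^ a + exp (-t) * t ^ (a + |b|))) atTop (𝓝 0) := by
    have h1 := tendsto_rpow_mul_exp_neg_mul_atTop_nhds_zero a 1 one_pos
    have h2 := tendsto_rpow_mul_exp_neg_mul_atTop_nhds_zero (a + |b|) 1 one_pos
    simpa [mul_comm] using (h1.add h2).const_mul (((1 + 1 / z) * 2) ^ |b|)
  refine squeeze_zero' ?_ ?_ hmajorant <;>
    filter_upwards [eventually_gt_atTop 0] with t ht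
  exacts [whittakerIntegrand_nonneg hz ht, whittakerIntegrand_le hz ht]

end Integrand

section Integral

variable {a b z : ℝ}

theorem hasDerivAt_whittakerIntegrand_param {t y : ℝ} (ht : 0 < t) (hy : 0 < y) :
    HasDerivAt (fun y => whittakerIntegrand a b y t)
      (-(b / y ^ 2) * whittakerIntegrand (a + 1) (b - 1) y t) y := by
  have hu := one_le_one_add_div hy ht
  have hinner : HasDerivAt (fun y => 1 + t / y) (t * -(y ^ 2)⁻¹) y := by
    simpa [div_eq_mul_inv] using ((hasDerivAt_inv hy.ne').const_mul t).const_add 1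
  refine ((hinner.rpow_const (p := b) (Or.inl (by positivity))).const_mul
    (exp (-t) * t ^ a)).congr_deriv ?_
  rw [whittakerIntegrand_add_one_left ht, whittakerIntegrand]
  ring

theorem norm_deriv_whittakerIntegrand_le {t y : ℝ} (ht : 0 < t) (hz : 0 < z)
    (hy : y ∈ Metric.ball z (z / 2)) :
    ‖-(b / y ^ 2) * whittakerIntegrand (a + 1) (b - 1) y t‖ ≤
      |b| * (4 / z ^ 2) * whittakerIntegrand (a + 1) |b - 1| (z / 2) t := by
  have hzy : z / 2 ≤ y := by
    rw [Metric.mem_ball, dist_eq, abs_lt] at hy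
    linarith
  have hz2 : 0 < z / 2 := by positivity
  have hy0 : 0 < y := hz2.trans_le hzy
  have hsq : 4 / z ^ 2 = 1 / (z / 2) ^ 2 := by field_simp; norm_num
  rw [norm_mul, norm_neg, norm_div, norm_of_nonneg (whittakerIntegrand_nonneg hy0 ht), norm_pow,
    Real.norm_eq_abs, Real.norm_eq_abs, abs_of_pos hy0, div_eq_mul_one_div, hsq, mul_assoc,
    mul_assoc]
  gcongr
  · exact whittakerIntegrand_nonneg hy0 ht
  · exact whittakerIntegrand_le_of_le hz2 hzy ht

theorem hasDerivAt_whittakerIntegral (ha : -1 < a) (hz : 0 < z) :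
    HasDerivAt (whittakerIntegral a b) (-(b / z ^ 2) * whittakerIntegral (a + 1) (b - 1) z) z := by
  have hz2 : 0 < z / 2 := by positivity
  have key := hasDerivAt_integral_of_dominated_loc_of_deriv_le
    (F := fun y t => whittakerIntegrand a b y t)
    (F' := fun y t => -(b / y ^ 2) * whittakerIntegrand (a + 1) (b - 1) y t)
    (bound := fun t => |b| * (4 / z ^ 2) * whittakerIntegrand (a + 1) |b - 1| (z / 2) t)
    (Metric.ball_mem_nhds z hz2)
    (by filter_upwards [Ioi_mem_nhds hz] with y hy
        exact (integrableOn_whittakerIntegrand ha hy).aestronglyMeasurable)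
    (integrableOn_whittakerIntegrand ha hz)
    ((integrableOn_whittakerIntegrand (by linarith) hz).const_mul _).aestronglyMeasurable
    (by filter_upwards [ae_restrict_mem measurableSet_Ioi] with t ht y hy
        exact norm_deriv_whittakerIntegrand_le ht hz hy)
    ((integrableOn_whittakerIntegrand (by linarith) hz2).const_mul _)
    (by filter_upwards [ae_restrict_mem measurableSet_Ioi] with t ht y hy
        exact hasDerivAt_whittakerIntegrand_param ht (hz2.trans (by
          rw [Metric.mem_ball, dist_eq, abs_lt] at hy; linarith)))
  have hderiv := key.2
  rwa [integral_const_mul] at hderiv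

/-- Integration by parts: the boundary terms of `e^{-t} t^a (1 + t/z)^b` vanish at `0` because
`a > 0`, and at `∞` by the exponential decay. -/
theorem whittakerIntegral_eq_add (ha : 0 < a) (hz : 0 < z) :
    whittakerIntegral a b z =
      a * whittakerIntegral (a - 1) b z + b / z * whittakerIntegral a (b - 1) z := by
  have hderiv : ∀ t ∈ Ioi (0 : ℝ), HasDerivAt (whittakerIntegrand a b z)
      (-whittakerIntegrand a b z t + a * whittakerIntegrand (a - 1) b z t
        + b / z * whittakerIntegrand a (b - 1) z t) t := by
    intro t ht
    have hu := one_le_one_add_div hz ht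
    have hexp : HasDerivAt (fun t => exp (-t)) (exp (-t) * (-1)) t := by
      simpa using (hasDerivAt_neg t).exp
    have hpow : HasDerivAt (fun t => t ^ a) (a * t ^ (a - 1)) t :=
      hasDerivAt_rpow_const (Or.inl (ne_of_gt ht))
    have hbase : HasDerivAt (fun t => 1 + t / z) (1 / z) t := by
      simpa using ((hasDerivAt_id t).div_const z).const_add 1
    refine ((hexp.mul hpow).mul (hbase.rpow_const (p := b) (Or.inl (by positivity)))).congr_deriv ?_
    simp only [whittakerIntegrand, Pi.mul_apply]
    ring
  have hcont : ContinuousWithinAt (whittakerIntegrand a b z) (Ici 0) 0 := by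
    unfold whittakerIntegrand
    apply ContinuousAt.continuousWithinAt
    fun_prop (disch := first | exact Or.inr ha.le | (left; norm_num))
  have hint₀ : IntegrableOn (fun t => -whittakerIntegrand a b z t) (Ioi 0) :=
    (integrableOn_whittakerIntegrand (by linarith) hz).neg
  have hint₁ : IntegrableOn (fun t => a * whittakerIntegrand (a - 1) b z t) (Ioi 0) :=
    (integrableOn_whittakerIntegrand (by linarith) hz).const_mul a
  have hint₂ : IntegrableOn (fun t => b / z * whittakerIntegrand a (b - 1) z t) (Ioi 0) :=
    (integrableOn_whittakerIntegrand (by linarith) hz).const_mul (b / z)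
  have hFTC := integral_Ioi_of_hasDerivAt_of_tendsto hcont hderiv
    ((hint₀.add hint₁).add hint₂) (tendsto_whittakerIntegrand_atTop hz)
  have h0 : whittakerIntegrand a b z 0 = 0 := by simp [whittakerIntegrand, zero_rpow ha.ne']
  rw [integral_add ?_ hint₂, integral_add hint₀ hint₁, integral_neg,
    integral_const_mul, integral_const_mul, h0, sub_zero] at hFTC
  · unfold whittakerIntegral
    linarith
  · exact hint₀.add hint₁

theorem whittakerIntegral_add_one_sub_one (ha : -1 < a) (hz : 0 < z) :
    whittakerIntegral (a + 1) (b - 1) z =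
      z * (whittakerIntegral a b z - whittakerIntegral a (b - 1) z) := by
  unfold whittakerIntegral
  rw [← integral_sub (integrableOn_whittakerIntegrand ha hz)
    (integrableOn_whittakerIntegrand ha hz), ← integral_const_mul]
  refine setIntegral_congr_fun measurableSet_Ioi fun t ht => ?_
  have hu := one_le_one_add_div hz ht
  have hpow : (1 + t / z) ^ b = (1 + t / z) ^ (b - 1) * (1 + t / z) := by
    rw [← rpow_add_one (by positivity), sub_add_cancel]
  rw [whittakerIntegrand_add_one_left ht]
  simp only [whittakerIntegrand, hpow]
  field_simp
  ring

theorem whittakerIntegral_recurrence (ha : -1 < a) (hz : 0 < z) :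
    (a + 1) * whittakerIntegral a b z =
      (1 + (a - b + 2) / z) * whittakerIntegral (a + 1) (b - 1) z +
        (b - 1) / z ^ 2 * whittakerIntegral (a + 2) (b - 2) z := by
  have hparts := whittakerIntegral_eq_add (a := a + 1) (b := b - 1) (by linarith) hz
  have hshift₀ := whittakerIntegral_add_one_sub_one (b := b) ha hz
  have hshift₁ := whittakerIntegral_add_one_sub_one (b := b - 1) (by linarith : -1 < a + 1) hz
  rw [add_sub_cancel_right] at hparts
  rw [show b - 1 - 1 = b - 2 by ring] at hshift₁ hparts
  rw [show a + 1 + 1 = a + 2 by ring] at hshift₁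
  have hparts' : z * whittakerIntegral (a + 1) (b - 1) z =
      (a + 1) * z * whittakerIntegral a (b - 1) z +
        (b - 1) * whittakerIntegral (a + 1) (b - 2) z := by
    rw [hparts]; field_simp
  have key : (a + 1) * z ^ 2 * whittakerIntegral a b z =
      (z ^ 2 + (a - b + 2) * z) * whittakerIntegral (a + 1) (b - 1) z +
        (b - 1) * whittakerIntegral (a + 2) (b - 2) z := by
    linear_combination (-(a + 1) * z) * hshift₀ - z * hparts' - (b - 1) * hshift₁
  field_simp
  linear_combination key

end Integral

noncomputable def whittakerWDeriv (k μ z : ℝ) : ℝ :=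
  z ^ k * exp (-z / 2) / Gamma (1 / 2 + μ - k) *
    ((k / z - 1 / 2) * whittakerIntegral (μ - k - 1 / 2) (μ + k - 1 / 2) z -
      (μ + k - 1 / 2) / z ^ 2 * whittakerIntegral (μ - k + 1 / 2) (μ + k - 3 / 2) z)

section WhittakerEquation

variable {k μ z : ℝ}

theorem hasDerivAt_rpow_mul_exp_neg_half (hz : 0 < z) :
    HasDerivAt (fun z => z ^ k * exp (-z / 2)) (z ^ k * exp (-z / 2) * (k / z - 1 / 2)) z := by
  refine ((hasDerivAt_rpow_const (p := k) (Or.inl hz.ne')).mul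
    ((hasDerivAt_neg z).div_const 2).exp).congr_deriv ?_
  rw [rpow_sub_one hz.ne']
  ring

theorem hasDerivAt_whittakerW (hkμ : 0 < μ - k + 1 / 2) (hz : 0 < z) :
    HasDerivAt (whittakerW k μ) (whittakerWDeriv k μ z) z := by
  have hJ : HasDerivAt (whittakerIntegral (μ - k - 1 / 2) (μ + k - 1 / 2))
      (-((μ + k - 1 / 2) / z ^ 2) * whittakerIntegral (μ - k + 1 / 2) (μ + k - 3 / 2) z) z := by
    convert hasDerivAt_whittakerIntegral (a := μ - k - 1 / 2) (b := μ + k - 1 / 2)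
      (by linarith) hz using 3 <;> ring
  refine (((hasDerivAt_rpow_mul_exp_neg_half hz).div_const _).mul hJ).congr_deriv ?_
  rw [whittakerWDeriv]
  ring

theorem hasDerivAt_whittakerWDeriv (hkμ : 0 < μ - k + 1 / 2) (hz : 0 < z) :
    HasDerivAt (whittakerWDeriv k μ)
      ((1 / 4 - k / z + (μ ^ 2 - 1 / 4) / z ^ 2) * whittakerW k μ z) z := by
  have hJ₀ : HasDerivAt (whittakerIntegral (μ - k - 1 / 2) (μ + k - 1 / 2))
      (-((μ + k - 1 / 2) / z ^ 2) * whittakerIntegral (μ - k + 1 / 2) (μ + k - 3 / 2) z) z := by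
    convert hasDerivAt_whittakerIntegral (a := μ - k - 1 / 2) (b := μ + k - 1 / 2)
      (by linarith) hz using 3 <;> ring
  have hJ₁ : HasDerivAt (whittakerIntegral (μ - k + 1 / 2) (μ + k - 3 / 2))
      (-((μ + k - 3 / 2) / z ^ 2) * whittakerIntegral (μ - k + 3 / 2) (μ + k - 5 / 2) z) z := by
    convert hasDerivAt_whittakerIntegral (a := μ - k + 1 / 2) (b := μ + k - 3 / 2)
      (by linarith) hz using 3 <;> ring
  have hrec := whittakerIntegral_recurrence (a := μ - k - 1 / 2) (b := μ + k - 1 / 2)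
    (by linarith) hz
  rw [show μ - k - 1 / 2 + 1 = μ - k + 1 / 2 by ring,
    show μ - k - 1 / 2 + 2 = μ - k + 3 / 2 by ring,
    show μ + k - 1 / 2 - 1 = μ + k - 3 / 2 by ring,
    show μ + k - 1 / 2 - 2 = μ + k - 5 / 2 by ring] at hrec
  have hk : HasDerivAt (fun z => k / z - 1 / 2) (-(k / z ^ 2)) z :=
    (((hasDerivAt_const z k).fun_div (hasDerivAt_id' z) hz.ne').sub_const (1 / 2)).congr_deriv
      (by ring)
  have hb : HasDerivAt (fun z => (μ + k - 1 / 2) / z ^ 2) (-(2 * (μ + k - 1 / 2) / z ^ 3)) z :=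
    ((hasDerivAt_const z (μ + k - 1 / 2)).fun_div (hasDerivAt_pow 2 z)
      (pow_ne_zero 2 hz.ne')).congr_deriv (by field_simp; ring)
  refine (((hasDerivAt_rpow_mul_exp_neg_half hz).div_const _).mul
    ((hk.mul hJ₀).sub (hb.mul hJ₁))).congr_deriv ?_
  rw [whittakerW_eq_whittakerIntegral]
  simp only [Pi.mul_apply, Pi.sub_apply]
  linear_combination
    (-(z ^ k * exp (-z / 2) / Gamma (1 / 2 + μ - k)) * ((μ + k - 1 / 2) / z ^ 2)) * hrec

end WhittakerEquation

section LiouvilleTransform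

variable {w w' q : ℝ → ℝ} {c : ℝ}

theorem hasDerivAt_const_mul_exp_neg (c x : ℝ) :
    HasDerivAt (fun x => c * exp (-x)) (-(c * exp (-x))) x := by
  simpa using ((hasDerivAt_neg x).exp).const_mul c

theorem hasDerivAt_exp_half_mul_comp_const_mul_exp_neg (hc : 0 < c)
    (hw : ∀ z > 0, HasDerivAt w (w' z) z) (x : ℝ) :
    HasDerivAt (fun x => exp (x / 2) * w (c * exp (-x)))
      (exp (x / 2) * (w (c * exp (-x)) / 2 - c * exp (-x) * w' (c * exp (-x)))) x := by
  have hz : 0 < c * exp (-x) := by positivity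
  refine (((hasDerivAt_id x).div_const 2).exp.mul
    ((hw _ hz).comp x (hasDerivAt_const_mul_exp_neg c x))).congr_deriv ?_
  simp only [id, Function.comp]
  ring

/-- The factor `e^{x/2}` is what cancels the first-order term after the substitution
`z = c e^{-x}`. -/
theorem hasDerivAt_exp_half_mul_comp_const_mul_exp_neg_deriv (hc : 0 < c)
    (hw : ∀ z > 0, HasDerivAt w (w' z) z) (hw' : ∀ z > 0, HasDerivAt w' (q z * w z) z)
    (x : ℝ) :
    HasDerivAt
      (fun x => exp (x / 2) * (w (c * exp (-x)) / 2 - c * exp (-x) * w' (c * exp (-x))))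
      ((1 / 4 + (c * exp (-x)) ^ 2 * q (c * exp (-x))) * (exp (x / 2) * w (c * exp (-x)))) x := by
  have hz : 0 < c * exp (-x) := by positivity
  have hexp := hasDerivAt_const_mul_exp_neg c x
  refine (((hasDerivAt_id x).div_const 2).exp.mul ((((hw _ hz).comp x hexp).div_const 2).sub
    (hexp.mul ((hw' _ hz).comp x hexp)))).congr_deriv ?_
  simp only [id, Function.comp, Pi.sub_apply, Pi.mul_apply]
  ring

end LiouvilleTransform

/-- For every `μ > 0`, the function `g(x) = e^{x/2} W_{-1/2, μ}(2 e^{-x})` is twice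
differentiable and satisfies `g''(x) = (e^{-x} + e^{-2x} + μ²) g(x)` for all `x`. -/
theorem whittaker_morse_ode (μ : ℝ) (hμ : 0 < μ) :
    (∀ x : ℝ, DifferentiableAt ℝ
        (fun x => Real.exp (x / 2) * whittakerW (-(1 / 2)) μ (2 * Real.exp (-x))) x) ∧
    (∀ x : ℝ, DifferentiableAt ℝ
        (deriv (fun x => Real.exp (x / 2) * whittakerW (-(1 / 2)) μ (2 * Real.exp (-x)))) x) ∧
    (∀ x : ℝ, deriv (deriv
        (fun x => Real.exp (x / 2) * whittakerW (-(1 / 2)) μ (2 * Real.exp (-x)))) x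
      = (Real.exp (-x) + Real.exp (-2 * x) + μ ^ 2) *
          (Real.exp (x / 2) * whittakerW (-(1 / 2)) μ (2 * Real.exp (-x)))) := by
  have hkμ : 0 < μ - -(1 / 2) + 1 / 2 := by linarith
  have hW := fun z (hz : 0 < z) => hasDerivAt_whittakerW hkμ hz
  have hW' := fun z (hz : 0 < z) => hasDerivAt_whittakerWDeriv hkμ hz
  have hg := hasDerivAt_exp_half_mul_comp_const_mul_exp_neg two_pos hW
  have hg' := hasDerivAt_exp_half_mul_comp_const_mul_exp_neg_deriv two_pos hW hW'
  have hderiv := funext fun x => (hg x).deriv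
  refine ⟨fun x => (hg x).differentiableAt, fun x => hderiv ▸ (hg' x).differentiableAt,
    fun x => ?_⟩
  rw [hderiv, (hg' x).deriv, show -2 * x = -x + -x by ring, exp_add]
  congr 1
  field_simp
  ring
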